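/- arXiv:1105.0557 — 2 statements merged into one kernel-verified Lean document; each statement's English description precedes it below -/
import Mathlib

section
/- Let (X,d) be a metric space such that the action (Iso(X),X) is proper. Then the following are equivalent: (i) (Iso(X),X) is Cauchy-indivisible; (ii) whenever {g_i} is a net in Iso(X) with no convergent subnet in Iso(X) such that {g_i x} is a Cauchy net for some x ∈ X, then for every y ∈ X the net {g_i y} has at most one cluster point in the completion X̂ of X. -/
open Filter Topology Set UniformSpace

noncomputable section

/-- The topology of pointwise convergence on the group of surjective isometries of `X`. -/
instance isoPointwiseTopology (X : Type*) [MetricSpace X] : TopologicalSpace (X ≃ᵢ X) :=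
  TopologicalSpace.induced (fun g => (g : X → X)) Pi.topologicalSpace

/-- A net `g` diverges (`g_i → ∞`), i.e. it has no convergent subnet; equivalently,
no cluster point. -/
def DivergentNet {G : Type*} [TopologicalSpace G] {ι : Type*} [Preorder ι]
    (g : ι → G) : Prop :=
  ∀ h : G, ¬ MapClusterPt h atTop g

/-- A sequence `g` diverges (`g_n → ∞`), i.e. it has no convergent subsequence. -/
def DivergentSeq {G : Type*} [TopologicalSpace G] (g : ℕ → G) : Prop :=
  ∀ φ : ℕ → ℕ, StrictMono φ → ∀ h : G, ¬ Tendsto (g ∘ φ) atTop (𝓝 h)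

/-- The natural evaluation action of `Iso(X)` on `X` is Cauchy-indivisible: whenever a
net `g` in `Iso(X)` has no convergent subnet and `(g_i x)` is a Cauchy net for some
`x`, then `(g_i y)` is a Cauchy net for every `y`. -/
def IsoCauchyIndivisible (X : Type*) [MetricSpace X] : Prop :=
  ∀ (ι : Type*) [Nonempty ι] [Preorder ι] [IsDirected ι (· ≤ ·)],
    ∀ g : ι → X ≃ᵢ X, DivergentNet g →
      (∃ x : X, Cauchy (map (fun i => g i x) atTop)) →
      ∀ y : X, Cauchy (map (fun i => g i y) atTop)

/-- Properness of the isometric evaluation action, expressed through emptiness of all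
limit sets `L(x)`: no net in `Iso(X)` without convergent subnet has `(g_i x)`
converging in `X`. -/
def IsoProperLimits (X : Type*) [MetricSpace X] : Prop :=
  ∀ (ι : Type*) [Nonempty ι] [Preorder ι] [IsDirected ι (· ≤ ·)],
    ∀ g : ι → X ≃ᵢ X, DivergentNet g →
      ∀ x y : X, ¬ Tendsto (fun i => g i x) atTop (𝓝 y)

/-- The canonical lift `ĝ` of an isometry of `X` to the completion `X̂`. -/
def hatIso {X : Type*} [MetricSpace X] (g : X ≃ᵢ X) : Completion X → Completion X :=
  Completion.map (g : X → X)

/-- The lifted group `{ĝ : g ∈ Iso(X)}` inside the selfmaps of `X̂`. -/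
def hatIsoSet (X : Type*) [MetricSpace X] : Set (Completion X → Completion X) :=
  Set.range (hatIso (X := X))

/-- The Ellis semigroup `E`: the closure of the lifted group `{ĝ}` in the topology of
pointwise convergence on selfmaps of `X̂`. -/
def Ellis (X : Type*) [MetricSpace X] : Set (Completion X → Completion X) :=
  closure (hatIsoSet X)

/-- The set `H` of pointwise limits on `X̂` of divergent sequences of lifted isometries. -/
def Hset (X : Type*) [MetricSpace X] : Set (Completion X → Completion X) :=
  { h | Continuous h ∧ ∃ g : ℕ → X ≃ᵢ X, DivergentSeq g ∧
      Tendsto (fun n => hatIso (g n)) atTop (𝓝 h) }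

/-- The set `X_l ⊆ X̂` of limit points of the action `(Iso(X), X)` in the completion. -/
def Xl (X : Type*) [MetricSpace X] : Set (Completion X) :=
  { y | ∃ (g : ℕ → X ≃ᵢ X) (x : X), DivergentSeq g ∧
      CauchySeq (fun n => g n x) ∧
      Tendsto (fun n => ((g n x : X) : Completion X)) atTop (𝓝 y) }

/-- The set `X_p ⊆ X̂` of special limit points of the action `(Iso(X), X)`. -/
def Xp (X : Type*) [MetricSpace X] : Set (Completion X) :=
  { y | ∃ (g : ℕ → X ≃ᵢ X) (x : X), DivergentSeq g ∧
      CauchySeq (fun n => g n x) ∧ CauchySeq (fun n => (g n).symm x) ∧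
      Tendsto (fun n => ((g n x : X) : Completion X)) atTop (𝓝 y) }

/-- `X ∪ X_l`, with `X` identified with its image in the completion `X̂`. -/
def XcupXl (X : Type*) [MetricSpace X] : Set (Completion X) :=
  Set.range ((↑) : X → Completion X) ∪ Xl X

/-- `X ∪ X_p`, with `X` identified with its image in the completion `X̂`. -/
def XcupXp (X : Type*) [MetricSpace X] : Set (Completion X) :=
  Set.range ((↑) : X → Completion X) ∪ Xp X

/-- The Ellis semigroup is a group: every element has a two-sided inverse in `E`
(under composition). -/
def EllisIsGroup (X : Type*) [MetricSpace X] : Prop :=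
  ∀ f ∈ Ellis X, ∃ g ∈ Ellis X, f ∘ g = id ∧ g ∘ f = id

/-!
If `h x` stays close to `x`, then `h y` stays in a fixed finite union of `ε`-balls: otherwise an
`ε`-separated sequence `h n` with `h n x → x` would contradict properness. Applied to
`(g j)⁻¹ * g i` this makes the orbit net `(g i y)` totally bounded whenever `(g i x)` is Cauchy,
and a totally bounded net in the complete space `X̂` is Cauchy iff it has at most one cluster point.

The nets in the two conditions (and in properness) are indexed by types of unrelated universes, so
the argument passes through sequences: two cluster points of `(g i y)` are realised along one
interleaved sequence `g (c n)` whose `x`-orbit still converges in `X̂`. That sequence diverges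
because properness, by an ultrafilter limit argument, forbids `(g i x)` from converging in `X`.
-/

universe v

section

variable {α β γ ι : Type*}

theorem MapClusterPt.eq_of_tendsto [TopologicalSpace α] [T2Space α] {l : Filter ι} {u : ι → α}
    {a b : α} (ha : MapClusterPt a l u) (hb : Tendsto u l (𝓝 b)) : a = b :=
  eq_of_nhds_neBot (ha.clusterPt.mono hb)

theorem Filter.TotallyBounded.cauchy_of_subsingleton_clusterPt [UniformSpace α] [CompleteSpace α]
    {F : Filter α} [F.NeBot] (hF : F.TotallyBounded) (h : {a | ClusterPt a F}.Subsingleton) :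
    Cauchy F := by
  obtain ⟨z, hz⟩ := hF.exists_clusterPt
  refine (cauchy_nhds (a := z)).mono (le_iff_ultrafilter.2 fun U hU => ?_)
  obtain ⟨a, ha⟩ := CompleteSpace.complete (U.cauchy_of_totallyBounded' (hF.mono hU))
  rwa [h ((Ultrafilter.clusterPt_iff.2 ha).mono hU) hz] at ha

theorem not_mapClusterPt_of_le_dist [PseudoMetricSpace α] {u : ℕ → α} {ε : ℝ} (hε : 0 < ε)
    (hu : ∀ m n, m < n → ε ≤ dist (u m) (u n)) (a : α) : ¬ MapClusterPt a atTop u := by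
  intro ha
  have hfreq := frequently_atTop.1
    (mapClusterPt_iff_frequently.1 ha _ (Metric.ball_mem_nhds a (half_pos hε)))
  obtain ⟨m, -, hm⟩ := hfreq 0
  obtain ⟨n, hmn, hn⟩ := hfreq (m + 1)
  rw [Metric.mem_ball] at hm hn
  linarith [hu m n hmn, dist_triangle_right (u m) (u n) a]

theorem exists_seq_tendsto_and_mapClusterPt₂ [TopologicalSpace β] [FirstCountableTopology β]
    [TopologicalSpace γ] [FirstCountableTopology γ] {l : Filter ι} {f : ι → β} {g : ι → γ}
    {a : β} {z w : γ} (hf : Tendsto f l (𝓝 a)) (hz : MapClusterPt z l g)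
    (hw : MapClusterPt w l g) :
    ∃ c : ℕ → ι, Tendsto (f ∘ c) atTop (𝓝 a) ∧ MapClusterPt z atTop (g ∘ c) ∧
      MapClusterPt w atTop (g ∘ c) := by
  have hseq : ∀ b, MapClusterPt b l g →
      ∃ c : ℕ → ι, Tendsto (f ∘ c) atTop (𝓝 a) ∧ Tendsto (g ∘ c) atTop (𝓝 b) := by
    intro b hb
    obtain ⟨U, hUl, hU⟩ := mapClusterPt_iff_ultrafilter.1 hb
    obtain ⟨c, hc, -⟩ :=
      (((hf.mono_left hUl).prodMk_nhds hU).mapClusterPt.mono le_top).exists_seq_tendsto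
    exact ⟨c, (continuous_fst.tendsto _).comp hc, (continuous_snd.tendsto _).comp hc⟩
  obtain ⟨c₁, hf₁, hg₁⟩ := hseq z hz
  obtain ⟨c₂, hf₂, hg₂⟩ := hseq w hw
  let c : ℕ → ι := fun n => if n % 2 = 0 then c₁ (n / 2) else c₂ (n / 2)
  have hc₁ : c ∘ (2 * ·) = c₁ := funext fun n => by simp [c]
  have hc₂ : c ∘ (2 * · + 1) = c₂ := funext fun n => by
    simp only [c, Function.comp_apply, if_neg (show (2 * n + 1) % 2 ≠ 0 by omega),
      show (2 * n + 1) / 2 = n by omega]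
  refine ⟨c, fun S hS => mem_map.2 ?_, ?_, ?_⟩
  · filter_upwards [(Nat.tendsto_div_const_atTop two_ne_zero).eventually
      ((hf₁.eventually_mem hS).and (hf₂.eventually_mem hS))]
      with n hn
    show f (if n % 2 = 0 then c₁ (n / 2) else c₂ (n / 2)) ∈ S
    split_ifs
    exacts [hn.1, hn.2]
  · refine MapClusterPt.of_comp (φ := (2 * ·))
      (tendsto_atTop_mono (fun n => show n ≤ 2 * n by omega) tendsto_id) ?_
    rw [Function.comp_assoc, hc₁]
    exact hg₁.mapClusterPt
  · refine MapClusterPt.of_comp (φ := (2 * · + 1))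
      (tendsto_atTop_mono (fun n => show n ≤ 2 * n + 1 by omega) tendsto_id) ?_
    rw [Function.comp_assoc, hc₂]
    exact hg₂.mapClusterPt

theorem map_uliftDown_atTop (f : ℕ → α) :
    map (fun n : ULift.{v} ℕ => f n.down) atTop = map f atTop := by
  rw [← (ULift.orderIso.{v} (α := ℕ)).map_atTop, map_map]
  rfl

theorem DivergentNet.uliftDown [TopologicalSpace α] {s : ℕ → α} (hs : DivergentNet s) :
    DivergentNet (fun n : ULift.{v} ℕ => s n.down) :=
  fun h hh => hs h (by rwa [MapClusterPt, map_uliftDown_atTop] at hh)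

theorem UniformSpace.Completion.cauchy_map_coe_iff [UniformSpace α] {l : Filter ι} {f : ι → α} :
    Cauchy (map (fun i => (f i : Completion α)) l) ↔ Cauchy (map f l) := by
  rw [← (isUniformInducing_coe α).cauchy_map_iff, map_map]
  rfl

theorem IsometryEquiv.dist_symm_apply [PseudoMetricSpace α] [PseudoMetricSpace β] (e : α ≃ᵢ β)
    (a : β) (b : α) : dist (e.symm a) b = dist a (e b) := by
  rw [← e.dist_eq, e.apply_symm_apply]

end

theorem continuous_isometryEquiv_apply {X : Type*} [MetricSpace X] (y : X) :
    Continuous fun g : X ≃ᵢ X => g y :=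
  (continuous_apply y).comp continuous_induced_dom

namespace IsometryEquiv

variable {X ι : Type*} [MetricSpace X] {l : Filter ι}

theorem tendsto_symm_apply_of_tendsto_apply {g : ι → X ≃ᵢ X} {y q : X}
    (h : Tendsto (fun i => g i y) l (𝓝 q)) : Tendsto (fun i => (g i).symm q) l (𝓝 y) := by
  rw [tendsto_iff_dist_tendsto_zero] at h ⊢
  simpa only [dist_symm_apply, dist_comm q] using h

theorem exists_tendsto_of_tendsto_apply [l.NeBot] {g : ι → X ≃ᵢ X} {φ ψ : X → X}
    (hφ : ∀ y, Tendsto (fun i => g i y) l (𝓝 (φ y)))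
    (hψ : ∀ y, Tendsto (fun i => (g i).symm y) l (𝓝 (ψ y))) :
    ∃ h : X ≃ᵢ X, Tendsto g l (𝓝 h) := by
  have hψφ : Function.LeftInverse ψ φ := fun y =>
    tendsto_nhds_unique (hψ (φ y)) (tendsto_symm_apply_of_tendsto_apply (hφ y))
  have hφψ : Function.RightInverse ψ φ := fun y =>
    tendsto_nhds_unique (hφ (ψ y)) (by simpa using tendsto_symm_apply_of_tendsto_apply (hψ y))
  have hφ_iso : Isometry φ := Isometry.of_dist_eq fun a b =>
    tendsto_nhds_unique ((hφ a).dist (hφ b))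
      (by simpa only [IsometryEquiv.dist_eq] using tendsto_const_nhds)
  refine ⟨⟨⟨φ, ψ, hψφ, hφψ⟩, hφ_iso⟩, ?_⟩
  rw [nhds_induced, tendsto_comap_iff, tendsto_pi_nhds]
  exact hφ

end IsometryEquiv

namespace IsoProperLimits

variable {X ι : Type*} [MetricSpace X]

theorem exists_mapClusterPt_of_tendsto (hP : IsoProperLimits X) {s : ℕ → X ≃ᵢ X} {x p : X}
    (hs : Tendsto (fun n => s n x) atTop (𝓝 p)) : ∃ κ, MapClusterPt κ atTop s := by
  by_contra! hdiv
  exact hP (ULift ℕ) (fun n => s n.down) (DivergentNet.uliftDown hdiv) x p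
    (hs.comp (ULift.orderIso (α := ℕ)).tendsto_atTop)

theorem exists_finite_cover (hP : IsoProperLimits X) (x y : X) {ε : ℝ} (hε : 0 < ε) :
    ∃ δ > 0, ∃ t : Finset X, ∀ h : X ≃ᵢ X, dist (h x) x < δ → ∃ c ∈ t, dist (h y) c < ε := by
  classical
  by_contra! H
  -- the `ℕ`-component increases along the sequence and bounds `dist (h x) x` by `1 / (n + 1)`
  obtain ⟨f, hfx, hfy⟩ := exists_seq_of_forall_finset_exists
    (fun q : ℕ × (X ≃ᵢ X) => dist (q.2 x) x < 1 / ((q.1 : ℝ) + 1))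
    (fun q q' => q.1 < q'.1 ∧ ε ≤ dist (q.2 y) (q'.2 y)) fun s _ => by
      obtain ⟨h, hx, hy⟩ :=
        H (1 / (((s.sup Prod.fst + 1 : ℕ) : ℝ) + 1)) (by positivity) (s.image fun q => q.2 y)
      exact ⟨(s.sup Prod.fst + 1, h), hx, fun q hq => ⟨Nat.lt_succ_of_le (s.le_sup hq),
        by rw [dist_comm]; exact hy _ (Finset.mem_image_of_mem _ hq)⟩⟩
  have hmono : StrictMono fun n => (f n).1 := fun m n hmn => (hfy m n hmn).1
  have hx : Tendsto (fun n => (f n).2 x) atTop (𝓝 x) := by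
    refine tendsto_iff_dist_tendsto_zero.2 (squeeze_zero (fun _ => dist_nonneg)
      (fun n => (hfx n).le.trans ?_) tendsto_one_div_add_atTop_nhds_zero_nat)
    gcongr
    exact_mod_cast hmono.id_le n
  obtain ⟨κ, hκ⟩ := hP.exists_mapClusterPt_of_tendsto hx
  exact not_mapClusterPt_of_le_dist hε (fun m n hmn => (hfy m n hmn).2) (κ y)
    (hκ.tendsto_comp ((continuous_isometryEquiv_apply y).tendsto κ))

theorem totallyBounded_map_apply (hP : IsoProperLimits X) {l : Filter ι} [l.NeBot]
    {g : ι → X ≃ᵢ X} {x : X} (hx : Cauchy (map (fun i => g i x) l)) (y : X) :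
    (map (fun i => g i y) l).TotallyBounded := by
  rw [Metric.uniformity_basis_dist.filter_totallyBounded_iff]
  intro ε hε
  obtain ⟨δ, hδ, t, ht⟩ := hP.exists_finite_cover x y hε
  obtain ⟨S, hS, hSδ⟩ := (Metric.cauchy_iff.1 hx).2 δ hδ
  obtain ⟨j, hj⟩ := Filter.nonempty_of_mem (f := l) (mem_map.1 hS)
  refine ⟨g j '' t, t.finite_toSet.image _, mem_map.2 ?_⟩
  filter_upwards [mem_map.1 hS] with i hi
  obtain ⟨c, hc, hcy⟩ := ht ((g i).trans (g j).symm)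
    (by simpa only [IsometryEquiv.trans_apply, IsometryEquiv.dist_symm_apply] using hSδ _ hi _ hj)
  refine ⟨g j c, mem_image_of_mem _ hc, ?_⟩
  simpa only [mem_ofPred_eq, IsometryEquiv.trans_apply, IsometryEquiv.dist_symm_apply] using hcy

theorem exists_tendsto_apply_of_tendsto (hP : IsoProperLimits X) {U : Ultrafilter ι}
    {g : ι → X ≃ᵢ X} {x p : X} (hx : Tendsto (fun i => g i x) U (𝓝 p)) (y : X) :
    ∃ q, Tendsto (fun i => g i y) U (𝓝 q) := by
  have hTB : (U.map fun i => (g i y : Completion X) : Filter (Completion X)).TotallyBounded :=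
    (hP.totallyBounded_map_apply hx.cauchy_map y).map (Completion.uniformContinuous_coe X)
  obtain ⟨ylim, hylim⟩ := CompleteSpace.complete (Ultrafilter.cauchy_of_totallyBounded' _ hTB)
  -- `ylim` lies in `X`: a sequence along `U` has a cluster point `κ` by properness, so `ylim = κ y`
  obtain ⟨c, hc, -⟩ := ((hx.prodMk_nhds hylim).mapClusterPt.mono le_top).exists_seq_tendsto
  obtain ⟨κ, hκ⟩ :=
    hP.exists_mapClusterPt_of_tendsto (s := g ∘ c) ((continuous_fst.tendsto _).comp hc)
  have hκy : (κ y : Completion X) = ylim :=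
    (hκ.tendsto_comp (((Completion.continuous_coe X).comp
      (continuous_isometryEquiv_apply y)).tendsto κ)).eq_of_tendsto
      ((continuous_snd.tendsto _).comp hc)
  refine ⟨κ y, (Completion.isUniformInducing_coe X).isInducing.tendsto_nhds_iff.2 ?_⟩
  rwa [hκy]

theorem not_tendsto_apply (hP : IsoProperLimits X) [Nonempty ι] [Preorder ι]
    [IsDirected ι (· ≤ ·)] {g : ι → X ≃ᵢ X} (hg : DivergentNet g) (x p : X) :
    ¬ Tendsto (fun i => g i x) atTop (𝓝 p) := by
  intro hx
  let U := Ultrafilter.of (atTop : Filter ι)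
  have hU : (U : Filter ι) ≤ atTop := Ultrafilter.of_le _
  choose φ hφ using hP.exists_tendsto_apply_of_tendsto (hx.mono_left hU)
  choose ψ hψ using
    hP.exists_tendsto_apply_of_tendsto
      (IsometryEquiv.tendsto_symm_apply_of_tendsto_apply (hx.mono_left hU))
  obtain ⟨h, hh⟩ := IsometryEquiv.exists_tendsto_of_tendsto_apply hφ hψ
  exact hg h (hh.mapClusterPt.mono hU)

theorem exists_divergent_seq_of_mapClusterPt₂ (hP : IsoProperLimits X) [Nonempty ι] [Preorder ι]
    [IsDirected ι (· ≤ ·)] {g : ι → X ≃ᵢ X} (hg : DivergentNet g) {x : X}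
    (hx : Cauchy (map (fun i => g i x) atTop)) {y : X} {z w : Completion X}
    (hz : MapClusterPt z atTop fun i => (g i y : Completion X))
    (hw : MapClusterPt w atTop fun i => (g i y : Completion X)) :
    ∃ s : ℕ → X ≃ᵢ X, DivergentNet s ∧ Cauchy (map (fun n => s n x) atTop) ∧
      MapClusterPt z atTop (fun n => (s n y : Completion X)) ∧
      MapClusterPt w atTop (fun n => (s n y : Completion X)) := by
  obtain ⟨xlim, hxlim⟩ := CompleteSpace.complete (Completion.cauchy_map_coe_iff.2 hx)
  obtain ⟨c, hcx, hcz, hcw⟩ := exists_seq_tendsto_and_mapClusterPt₂ hxlim hz hw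
  refine ⟨g ∘ c, fun κ hκ => ?_, Completion.cauchy_map_coe_iff.1 hcx.cauchy_map, hcz, hcw⟩
  have hκx : (κ x : Completion X) = xlim :=
    (hκ.tendsto_comp (((Completion.continuous_coe X).comp
      (continuous_isometryEquiv_apply x)).tendsto κ)).eq_of_tendsto hcx
  refine hP.not_tendsto_apply hg x (κ x)
    ((Completion.isUniformInducing_coe X).isInducing.tendsto_nhds_iff.2 ?_)
  rwa [hκx]

end IsoProperLimits

/-- For a proper action `(Iso(X), X)`: the action is Cauchy-indivisible iff for every
net `(g_i)` in `Iso(X)` with no convergent subnet such that `(g_i x)` is Cauchy for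
some `x`, and for every `y ∈ X`, the net `(g_i y)` has at most one cluster point in
the completion `X̂`. -/
theorem isoCauchyIndivisible_iff_at_most_one_clusterPt (X : Type*) [MetricSpace X]
    (hP : IsoProperLimits X) :
    IsoCauchyIndivisible X ↔
      ∀ (ι : Type*) [Nonempty ι] [Preorder ι] [IsDirected ι (· ≤ ·)],
        ∀ g : ι → X ≃ᵢ X, DivergentNet g →
          (∃ x : X, Cauchy (map (fun i => g i x) atTop)) →
          ∀ (y : X) (z w : Completion X),
            MapClusterPt z atTop (fun i => ((g i y : X) : Completion X)) →
            MapClusterPt w atTop (fun i => ((g i y : X) : Completion X)) → z = w := by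
  constructor
  · intro hCI ι _ _ _ g hg ⟨x, hx⟩ y z w hz hw
    obtain ⟨s, hs, hsx, hsz, hsw⟩ := hP.exists_divergent_seq_of_mapClusterPt₂ hg hx hz hw
    have hsy : Cauchy (map (fun n => s n y) atTop) := by
      simpa only [map_uliftDown_atTop fun n => s n y] using
        hCI (ULift ℕ) (fun n => s n.down) hs.uliftDown
          ⟨x, by rwa [map_uliftDown_atTop fun n => s n x]⟩ y
    obtain ⟨ylim, hylim⟩ := CompleteSpace.complete (Completion.cauchy_map_coe_iff.2 hsy)
    exact (hsz.eq_of_tendsto hylim).trans (hsw.eq_of_tendsto hylim).symm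
  · intro H ι _ _ _ g hg ⟨x, hx⟩ y
    refine Completion.cauchy_map_coe_iff.1
      (((hP.totallyBounded_map_apply hx y).map (Completion.uniformContinuous_coe X)
        ).cauchy_of_subsingleton_clusterPt fun z hz w hw => ?_)
    obtain ⟨s, hs, hsx, hsz, hsw⟩ := hP.exists_divergent_seq_of_mapClusterPt₂ hg hx hz hw
    exact H (ULift ℕ) (fun n => s n.down) hs.uliftDown
      ⟨x, by rwa [map_uliftDown_atTop fun n => s n x]⟩ y z w
      (by rwa [MapClusterPt, map_uliftDown_atTop fun n => (s n y : Completion X)])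
      (by rwa [MapClusterPt, map_uliftDown_atTop fun n => (s n y : Completion X)])

end
end

section
/- Let (X,d) be a separable metric space such that the action (Iso(X),X) is Cauchy-indivisible. If {g_n} is a sequence in Iso(X) converging pointwise on X to some f ∈ C(X,X), then the extensions ĝ_n converge pointwise on X̂ to the continuous extension f̂ of f, and f̂ is a surjective isometry of X̂ (f̂ ∈ Iso(X̂)). -/
open Filter Topology Set UniformSpace

noncomputable section

/-!
A pointwise limit `f` of isometries is an isometry, so `f̂` is an isometry of `X̂`, and since the
`ĝ_n` are equicontinuous, their convergence to `f̂` on the dense subset `X` spreads to all of `X̂`.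
For surjectivity, `g_n⁻¹ (f x) → x`, and we show that `(g_n⁻¹ y)` is Cauchy for every `y`: if
`(g_n⁻¹)` has a cluster point `h ∈ Iso(X)`, then `h ∘ f = id`, so `f = h⁻¹` is onto and
`g_n⁻¹ y → h y`; otherwise `(g_n⁻¹)` diverges and Cauchy-indivisibility applies. The limits of
`g_n⁻¹ y` in `X̂` form an isometry `f' : X → X̂` with `f' ∘ f = id`, whose extension to `X̂` is a
left inverse of `f̂`.
-/

universe u v

namespace IsometryEquiv

variable {X : Type*} [MetricSpace X]

theorem continuous_eval_const (x : X) : Continuous fun e : X ≃ᵢ X => e x :=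
  (continuous_apply x).comp continuous_induced_dom

theorem eq_of_mapClusterPt_of_tendsto {ι : Type*} {l : Filter ι} {g : ι → X ≃ᵢ X} {h : X ≃ᵢ X}
    (hh : MapClusterPt h l g) {x y : X} (hx : Tendsto (fun i => g i x) l (𝓝 y)) : h x = y :=
  eq_of_nhds_neBot
    ((hh.continuousAt_comp (continuous_eval_const x).continuousAt).clusterPt.mono hx)

end IsometryEquiv

theorem tendsto_symm_apply_of_tendsto {α β ι : Type*} [PseudoMetricSpace α] [PseudoMetricSpace β]
    {l : Filter ι} {g : ι → α ≃ᵢ β} {x : α} {y : β} (hg : Tendsto (fun i => g i x) l (𝓝 y)) :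
    Tendsto (fun i => (g i).symm y) l (𝓝 x) := by
  rw [tendsto_iff_dist_tendsto_zero] at hg ⊢
  have hdist : ∀ i, dist ((g i).symm y) x = dist y (g i x) := fun i => by
    rw [← (g i).dist_eq, IsometryEquiv.apply_symm_apply]
  simpa only [hdist, dist_comm y] using hg

theorem isometry_of_tendsto {α β ι : Type*} [PseudoMetricSpace α] [PseudoMetricSpace β]
    {l : Filter ι} [l.NeBot] {F : ι → α → β} (hF : ∀ i, Isometry (F i)) {f : α → β}
    (h : ∀ x, Tendsto (fun i => F i x) l (𝓝 (f x))) : Isometry f :=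
  Isometry.of_dist_eq fun x y =>
    tendsto_nhds_unique ((h x).dist (h y)) (by simp only [(hF _).dist_eq, tendsto_const_nhds])

theorem IsoCauchyIndivisible.cauchySeq_apply {X : Type u} [MetricSpace X]
    (hCI : IsoCauchyIndivisible.{u, v} X) {g : ℕ → X ≃ᵢ X} (hg : DivergentNet g) {x : X}
    (hx : CauchySeq fun n => g n x) (y : X) : CauchySeq fun n => g n y := by
  have hdown : map (ULift.down : ULift.{v} ℕ → ℕ) atTop = atTop :=
    (ULift.orderIso (α := ℕ)).map_atTop
  rw [CauchySeq, ← hdown, map_map]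
  refine hCI (ULift ℕ) (g ∘ ULift.down) (fun h hh => hg h ?_) ⟨x, ?_⟩ y
  · rwa [mapClusterPt_comp, hdown] at hh
  · rwa [CauchySeq, ← hdown, map_map] at hx

theorem IsoCauchyIndivisible.cauchySeq_symm_apply {X : Type u} [MetricSpace X]
    (hCI : IsoCauchyIndivisible.{u, v} X) {g : ℕ → X ≃ᵢ X} {f : X → X}
    (hconv : ∀ x, Tendsto (fun n => g n x) atTop (𝓝 (f x))) (y : X) :
    CauchySeq fun n => (g n).symm y := by
  by_cases hclus : ∃ h, MapClusterPt h atTop fun n => (g n).symm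
  · obtain ⟨h, hh⟩ := hclus
    have hhf : ∀ x, h (f x) = x := fun x =>
      IsometryEquiv.eq_of_mapClusterPt_of_tendsto hh (tendsto_symm_apply_of_tendsto (hconv x))
    have hfh : f (h y) = y := by
      rw [← h.symm_apply_apply (f (h y)), hhf, h.symm_apply_apply]
    rw [← hfh]
    exact (tendsto_symm_apply_of_tendsto (hconv (h y))).cauchySeq
  · exact hCI.cauchySeq_apply (fun h hh => hclus ⟨h, hh⟩)
      (tendsto_symm_apply_of_tendsto (hconv y)).cauchySeq y

theorem exists_isometry_completion_leftInverse_of_cauchySeq_symm {X : Type*} [MetricSpace X]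
    {g : ℕ → X ≃ᵢ X} {f : X → X} (hconv : ∀ x, Tendsto (fun n => g n x) atTop (𝓝 (f x)))
    (hsymm : ∀ y, CauchySeq fun n => (g n).symm y) :
    ∃ f' : X → Completion X, Isometry f' ∧ ∀ x, f' (f x) = x := by
  have hlim : ∀ y, ∃ ξ : Completion X,
      Tendsto (fun n => ((g n).symm y : Completion X)) atTop (𝓝 ξ) :=
    fun y => cauchySeq_tendsto_of_complete
      ((Completion.uniformContinuous_coe X).comp_cauchySeq (hsymm y))
  choose f' hf' using hlim
  refine ⟨f', isometry_of_tendsto (fun n => Completion.coe_isometry.comp (g n).symm.isometry) hf',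
    fun x => tendsto_nhds_unique (hf' (f x)) ?_⟩
  exact (Completion.continuous_coe X).continuousAt.tendsto.comp
    (tendsto_symm_apply_of_tendsto (hconv x))

theorem extension_map_apply_of_leftInverse {α β : Type*} [UniformSpace α] [UniformSpace β]
    {f : α → β} {f' : β → Completion α} (hf : UniformContinuous f) (hf' : UniformContinuous f')
    (hff' : ∀ x, f' (f x) = x) (ξ : Completion α) :
    Completion.extension f' (Completion.map f ξ) = ξ := by
  refine Completion.induction_on ξ
    (isClosed_eq (Completion.continuous_extension.comp Completion.continuous_map) continuous_id)
    fun x => ?_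
  rw [Completion.map_coe hf, Completion.extension_coe hf', hff']

theorem tendsto_hatIso_of_tendsto {X ι : Type*} [MetricSpace X] {l : Filter ι} {g : ι → X ≃ᵢ X}
    {f : X → X} (hf : Isometry f) (hconv : ∀ x, Tendsto (fun i => g i x) l (𝓝 (f x)))
    (ξ : Completion X) : Tendsto (fun i => hatIso (g i) ξ) l (𝓝 (Completion.map f ξ)) := by
  have hequi : Equicontinuous fun i => hatIso (g i) :=
    (LipschitzWith.uniformEquicontinuous _ 1
      fun i => (g i).isometry.completion_map.lipschitz).equicontinuous
  refine Completion.induction_on ξ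
    (hequi.isClosed_setOfPred_tendsto hf.completion_map.continuous) fun x => ?_
  simp only [hatIso, Completion.map_coe (g _).isometry.uniformContinuous,
    Completion.map_coe hf.uniformContinuous]
  exact (Completion.continuous_coe X).continuousAt.tendsto.comp (hconv x)

theorem hat_tendsto_isometryEquiv_of_pointwise_limit_general (X : Type*) [MetricSpace X]
    (hCI : IsoCauchyIndivisible X)
    (g : ℕ → X ≃ᵢ X) (f : X → X)
    (hconv : ∀ x : X, Tendsto (fun n => g n x) atTop (𝓝 (f x))) :
    ∃ F : Completion X ≃ᵢ Completion X,
      (∀ x : X, F (x : Completion X) = ((f x : X) : Completion X)) ∧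
      ∀ ξ : Completion X, Tendsto (fun n => hatIso (g n) ξ) atTop (𝓝 (F ξ)) := by
  have hf : Isometry f := isometry_of_tendsto (fun n => (g n).isometry) hconv
  obtain ⟨f', hf', hf'f⟩ := exists_isometry_completion_leftInverse_of_cauchySeq_symm hconv
    (hCI.cauchySeq_symm_apply hconv)
  let F : Completion X ≃ᵢ Completion X := (IsometryEquiv.mk' _ _
    (extension_map_apply_of_leftInverse hf.uniformContinuous hf'.uniformContinuous hf'f)
    hf'.completion_extension).symm
  exact ⟨F, Completion.map_coe hf.uniformContinuous, tendsto_hatIso_of_tendsto hf hconv⟩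

/-- Proposition 5.7: if a sequence `(g_n)` in `Iso(X)` converges pointwise on `X` to a
continuous map `f : X → X`, then the lifts `ĝ_n` converge pointwise on `X̂` to the
continuous extension of `f`, which is a surjective isometry of `X̂`. -/
theorem hat_tendsto_isometryEquiv_of_pointwise_limit (X : Type*) [MetricSpace X]
    [TopologicalSpace.SeparableSpace X] (hCI : IsoCauchyIndivisible X)
    (g : ℕ → X ≃ᵢ X) (f : X → X) (hf : Continuous f)
    (hconv : ∀ x : X, Tendsto (fun n => g n x) atTop (𝓝 (f x))) :
    ∃ F : Completion X ≃ᵢ Completion X,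
      (∀ x : X, F (x : Completion X) = ((f x : X) : Completion X)) ∧
      ∀ ξ : Completion X, Tendsto (fun n => hatIso (g n) ξ) atTop (𝓝 (F ξ)) :=
  hat_tendsto_isometryEquiv_of_pointwise_limit_general X hCI g f hconv
end
end
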